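/- arXiv:1101.0967 — 2 statements merged into one kernel-verified Lean document; each statement's English description precedes it below -/
import Mathlib

section
/- Let p₁, p₂, p₃, p₄ be four points in the plane depending continuously on a parameter α ∈ [0,1] (each coordinate an affine function of α), such that at every α the four points are in 'strictly general position' (no three collinear), at α = 0 the quadrilateral p₁p₂p₃p₄ is convex or has its unique reflex vertex at p₃, at α = 1 it is convex or has its unique reflex vertex at p₂, and at every α at most one vertex is reflex. Then there exists α ∈ [0,1] at which the quadrilateral p₁p₂p₃p₄ is convex. -/
/-- Signed determinant of two plane vectors. -/
def det2 (u v : ℝ × ℝ) : ℝ := u.1 * v.2 - u.2 * v.1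

/-- Signed area of the triple of vertices of the quadrilateral `p` centered at `k`. -/
def sarea (p : Fin 4 → ℝ × ℝ) (k : Fin 4) : ℝ :=
  det2 (p k - p (k - 1)) (p (k + 1) - p (k - 1))

/-- The quadrilateral `p₀p₁p₂p₃` is convex: all four signed areas have the same sign. -/
def IsConvexQuad (p : Fin 4 → ℝ × ℝ) : Prop :=
  (∀ k, 0 < sarea p k) ∨ (∀ k, sarea p k < 0)

/-- The vertex `k` of the quadrilateral `p` is reflex: the signed area at `k` has the
sign opposite to the signed areas at all the other vertices. -/
def ReflexAt (p : Fin 4 → ℝ × ℝ) (k : Fin 4) : Prop :=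
  (sarea p k < 0 ∧ ∀ m, m ≠ k → 0 < sarea p m) ∨
    (0 < sarea p k ∧ ∀ m, m ≠ k → sarea p m < 0)

/-- Let the four vertices of a quadrilateral move affinely with a parameter
`α ∈ [0,1]`, staying in strictly general position (no three collinear, i.e. all four
signed areas nonzero), with at most one reflex vertex at every `α`; if at `α = 0` the
quadrilateral is convex or has its unique reflex vertex at `p₃` (index `2`) and at
`α = 1` it is convex or has its unique reflex vertex at `p₂` (index `1`), then for some
`α ∈ [0,1]` the quadrilateral is convex. -/
theorem exists_convex_parameter (a b : Fin 4 → ℝ × ℝ) (p : ℝ → Fin 4 → ℝ × ℝ)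
    (hp : ∀ α k, p α k = α • a k + (1 - α) • b k)
    (hgen : ∀ α ∈ Set.Icc (0 : ℝ) 1, ∀ k, sarea (p α) k ≠ 0)
    (h0 : IsConvexQuad (p 0) ∨ ReflexAt (p 0) 2)
    (h1 : IsConvexQuad (p 1) ∨ ReflexAt (p 1) 1)
    (hone : ∀ α ∈ Set.Icc (0 : ℝ) 1, ∀ k l, ReflexAt (p α) k → ReflexAt (p α) l → k = l) :
    ∃ α ∈ Set.Icc (0 : ℝ) 1, IsConvexQuad (p α) := by

  -- Each signed area is a continuous function of `α`.
  have hcont : ∀ k : Fin 4, Continuous fun α => sarea (p α) k := by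
    intro k
    have heq : (fun α => sarea (p α) k) = fun α =>
        det2 ((α • a k + (1 - α) • b k) - (α • a (k - 1) + (1 - α) • b (k - 1)))
             ((α • a (k + 1) + (1 - α) • b (k + 1)) - (α • a (k - 1) + (1 - α) • b (k - 1))) := by
      funext α
      simp [sarea, hp]
    rw [heq]
    unfold det2
    fun_prop
  -- Since each signed area never vanishes on `[0,1]`, its sign is constant.
  have hsign : ∀ k : Fin 4, (0 < sarea (p 0) k ↔ 0 < sarea (p 1) k) := by
    intro k
    have hc : ContinuousOn (fun α => sarea (p α) k) (Set.Icc (0 : ℝ) 1) :=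
      (hcont k).continuousOn
    have h01 : (0 : ℝ) ≤ 1 := by norm_num
    constructor
    · intro h0k
      by_contra h1k
      have h1k' : sarea (p 1) k < 0 :=
        lt_of_le_of_ne (not_lt.mp h1k) (hgen 1 (by norm_num) k)
      have : (0 : ℝ) ∈ (fun α => sarea (p α) k) '' Set.Icc 0 1 := by
        apply intermediate_value_Icc' h01 hc
        exact ⟨le_of_lt h1k', le_of_lt h0k⟩
      obtain ⟨α, hα, hα0⟩ := this
      exact (hgen α hα k) hα0
    · intro h1k
      by_contra h0k
      have h0k' : sarea (p 0) k < 0 :=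
        lt_of_le_of_ne (not_lt.mp h0k) (hgen 0 (by norm_num) k)
      have : (0 : ℝ) ∈ (fun α => sarea (p α) k) '' Set.Icc 0 1 := by
        apply intermediate_value_Icc h01 hc
        exact ⟨le_of_lt h0k', le_of_lt h1k⟩
      obtain ⟨α, hα, hα0⟩ := this
      exact (hgen α hα k) hα0
  rcases h0 with h0 | h0
  · exact ⟨0, by norm_num, h0⟩
  rcases h1 with h1 | h1
  · exact ⟨1, by norm_num, h1⟩
  -- Both endpoints reflex: derive a contradiction from constancy of signs.
  exfalso
  rcases h0 with ⟨h02, h0m⟩ | ⟨h02, h0m⟩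
  · have h00 : 0 < sarea (p 0) 0 := h0m 0 (by decide)
    have h01 : 0 < sarea (p 0) 1 := h0m 1 (by decide)
    rcases h1 with ⟨h11, h1m⟩ | ⟨h11, h1m⟩
    · exact absurd ((hsign 1).mp h01) (not_lt.mpr (le_of_lt h11))
    · exact absurd ((hsign 0).mp h00) (not_lt.mpr (le_of_lt (h1m 0 (by decide))))
  · have h00 : sarea (p 0) 0 < 0 := h0m 0 (by decide)
    have h01 : sarea (p 0) 1 < 0 := h0m 1 (by decide)
    rcases h1 with ⟨h11, h1m⟩ | ⟨h11, h1m⟩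
    · exact absurd ((hsign 0).mpr (h1m 0 (by decide))) (not_lt.mpr (le_of_lt h00))
    · exact absurd ((hsign 1).mpr h11) (not_lt.mpr (le_of_lt h01))
end

section
/- Let C be a simple closed polygon in the plane whose leftmost vertex is v₁ with neighbors v₂ and vₙ on the polygon, both having larger x-coordinate. Then in a small neighborhood of v₁, the interior of the polygon lies between the two edges v₁v₂ and v₁vₙ on the right side of v₁. -/
/-- A closed polygonal path `p 0, p 1, …, p (n-1)` (cyclically) is simple: any two
non-adjacent edges are disjoint, and any two consecutive edges meet exactly in their
common endpoint. -/
def IsSimplePolygon {n : ℕ} [NeZero n] (p : Fin n → ℝ × ℝ) : Prop :=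
  (∀ k : Fin n,
      segment ℝ (p k) (p (k + 1)) ∩ segment ℝ (p (k + 1)) (p (k + 2)) = {p (k + 1)}) ∧
    ∀ k l : Fin n, k ≠ l → l ≠ k + 1 → k ≠ l + 1 →
      segment ℝ (p k) (p (k + 1)) ∩ segment ℝ (p l) (p (l + 1)) = ∅

/-! `windingAngle P z`, the sum of the angles under which the edges are seen from `z`, is `2π`
times the winding number of the polygon around `z`. Off the polygon it is continuous with values
in `2πℤ`, hence constant on connected sets, and it tends to `0` at infinity, so it vanishes on
unbounded connected subsets of the complement. Near the leftmost vertex `p 0`, compare a point `z`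
in the corner with a point to the left of `p 0`, which lies in the half plane left of all vertices
and so has winding angle `0`. Computing both along the rays from `p 0`, the contributions of the edges not
incident to `p 0` agree, while those of the two incident edges differ by `±2π`, because the corner
angle is nonzero when the polygon is simple. Hence `z` has winding angle `±2π` and its component is
bounded. -/

open Complex Set Filter Topology Bornology
open scoped Real ComplexConjugate

section Polygon

variable {E F : Type*} [AddCommGroup E] [Module ℝ E] [AddCommGroup F] [Module ℝ F]
  {n : ℕ} [NeZero n]

def polygon (P : Fin n → E) : Set E := ⋃ k, segment ℝ (P k) (P (k + 1))

theorem polygon_subset_of_convex {P : Fin n → E} {s : Set E} (hs : Convex ℝ s)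
    (hP : ∀ k, P k ∈ s) : polygon P ⊆ s :=
  iUnion_subset fun k => hs.segment_subset (hP k) (hP (k + 1))

theorem vertex_ne_of_notMem_polygon {P : Fin n → E} {z : E} (hz : z ∉ polygon P) (k : Fin n) :
    P k ≠ z := by
  rintro rfl
  exact hz (mem_iUnion.2 ⟨k, left_mem_segment ℝ _ _⟩)

theorem preimage_Iio_subset_compl_polygon {P : Fin n → E} {f : E →ₗ[ℝ] ℝ} {c : ℝ}
    (hP : ∀ k, c ≤ f (P k)) : f ⁻¹' Iio c ⊆ (polygon P)ᶜ := by
  intro z hz hzP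
  have hle := polygon_subset_of_convex ((convex_Ici c).linear_preimage f) hP hzP
  simp only [mem_preimage, mem_Iio, mem_Ici] at hz hle
  linarith

theorem image_polygon {𝓕 : Type*} [FunLike 𝓕 E F] [LinearMapClass 𝓕 ℝ E F] (f : 𝓕)
    (P : Fin n → E) : f '' polygon P = polygon (fun k => f (P k)) := by
  simp only [polygon, image_iUnion]
  exact iUnion_congr fun k => image_segment ℝ (f : E →ₗ[ℝ] F).toAffineMap _ _

theorem map_mem_polygon_iff {𝓕 : Type*} [FunLike 𝓕 E F] [LinearMapClass 𝓕 ℝ E F] {f : 𝓕}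
    (hf : Function.Injective f) {P : Fin n → E} {x : E} :
    f x ∈ polygon (fun k => f (P k)) ↔ x ∈ polygon P := by
  rw [← image_polygon, hf.mem_set_image]

end Polygon

theorem not_isBounded_preimage_Iio {E : Type*} [NormedAddCommGroup E] [NormedSpace ℝ E]
    {f : E →L[ℝ] ℝ} (hf : Function.Surjective f) (c : ℝ) : ¬IsBounded (f ⁻¹' Iio c) := fun h =>
  not_bddBelow_Iio c <| by
    simpa only [image_preimage_eq _ hf] using (f.lipschitz.isBounded_image h).bddBelow

theorem div_mem_slitPlane_of_notMem_segment {a b z : ℂ} (hz : z ∉ segment ℝ a b) :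
    (b - z) / (a - z) ∈ slitPlane := by
  rw [mem_slitPlane_iff]
  by_contra! h
  apply hz
  rw [mem_segment_iff_sameRay, SameRay.sameRay_comm, sameRay_iff_arg_div_eq_zero, arg_eq_zero_iff,
    ← neg_sub a z, div_neg, neg_re, neg_im, h.2, neg_zero]
  exact ⟨neg_nonneg.2 h.1, rfl⟩

theorem continuousAt_arg_sub_div_sub {a b z : ℂ} (hz : z ∉ segment ℝ a b) :
    ContinuousAt (fun w => arg ((b - w) / (a - w))) z := by
  have ha : a - z ≠ 0 := sub_ne_zero.2 (by rintro rfl; exact hz (left_mem_segment ℝ _ b))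
  have hratio : ContinuousAt (fun w : ℂ => (b - w) / (a - w)) z := by fun_prop (disch := exact ha)
  exact ContinuousAt.comp (g := arg) (continuousAt_arg (div_mem_slitPlane_of_notMem_segment hz))
    hratio

theorem Complex.arg_div_of_re_pos {z w : ℂ} (hz : 0 < z.re) (hw : 0 < w.re) :
    arg (z / w) = arg z - arg w := by
  have hz' := abs_lt.1 (abs_arg_lt_pi_div_two_iff.2 (Or.inl hz))
  have hw' := abs_lt.1 (abs_arg_lt_pi_div_two_iff.2 (Or.inl hw))
  rw [arg_coe_angle_eq_iff_eq_toReal.1 (arg_div_coe_angle (ne_zero_of_re_pos hz)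
    (ne_zero_of_re_pos hw)), ← Real.Angle.coe_sub,
    Real.Angle.toReal_coe_eq_self_iff.2 ⟨by linarith, by linarith⟩]

section WindingAngle

variable {n : ℕ} [NeZero n] {P : Fin n → ℂ}

noncomputable def windingAngle (P : Fin n → ℂ) (z : ℂ) : ℝ :=
  ∑ k, arg ((P (k + 1) - z) / (P k - z))

theorem windingAngle_mem_zmultiples {z : ℂ} (hz : ∀ k, P k ≠ z) :
    windingAngle P z ∈ AddSubgroup.zmultiples (2 * π) := by
  have h : ((windingAngle P z : ℝ) : Real.Angle) = 0 := by
    rw [windingAngle, ← Real.Angle.coe_coeHom, map_sum]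
    simp only [Real.Angle.coe_coeHom]
    rw [Finset.sum_congr rfl fun k _ => arg_div_coe_angle (sub_ne_zero.2 (hz _))
      (sub_ne_zero.2 (hz k)), Finset.sum_sub_distrib, sub_eq_zero]
    exact Equiv.sum_comp (Equiv.addRight 1) fun k => (arg (P k - z) : Real.Angle)
  exact AddSubgroup.mem_zmultiples_iff.2 (Real.Angle.coe_eq_zero_iff.1 h)

theorem continuousAt_windingAngle {z : ℂ} (hz : z ∉ polygon P) :
    ContinuousAt (windingAngle P) z :=
  tendsto_finsetSum _ fun k _ =>
    continuousAt_arg_sub_div_sub fun h => hz (mem_iUnion.2 ⟨k, h⟩)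

theorem IsPreconnected.windingAngle_eq {S : Set ℂ} (hS : IsPreconnected S)
    (hSP : S ⊆ (polygon P)ᶜ) {x y : ℂ} (hx : x ∈ S) (hy : y ∈ S) :
    windingAngle P x = windingAngle P y :=
  hS.constant_of_mapsTo (T := (AddSubgroup.zmultiples (2 * π) : Set ℝ))
    (isDiscrete_iff_discreteTopology.2
      (inferInstanceAs (DiscreteTopology (AddSubgroup.zmultiples (2 * π)))))
    (fun _ hz => (continuousAt_windingAngle (hSP hz)).continuousWithinAt)
    (fun _ hz => windingAngle_mem_zmultiples (vertex_ne_of_notMem_polygon (hSP hz))) hx hy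

theorem tendsto_windingAngle_cobounded (P : Fin n → ℂ) :
    Tendsto (windingAngle P) (cobounded ℂ) (𝓝 0) := by
  have hratio (a b : ℂ) : Tendsto (fun z => (b - z) / (a - z)) (cobounded ℂ) (𝓝 1) := by
    have h : Tendsto (fun z => 1 + (b - a) * (a - z)⁻¹) (cobounded ℂ) (𝓝 1) := by
      simpa using tendsto_const_nhds.add (tendsto_const_nhds.mul
        (tendsto_inv₀_cobounded.comp (tendsto_const_sub_cobounded a)))
    refine h.congr' ?_
    filter_upwards [isBounded_def.1 (isBounded_singleton (x := a))] with z hz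
    field_simp [sub_ne_zero.2 (Ne.symm hz)]
    ring
  have h := tendsto_finsetSum Finset.univ fun k _ =>
    (continuousAt_arg one_mem_slitPlane).tendsto.comp (hratio (P k) (P (k + 1)))
  simp only [arg_one, Finset.sum_const_zero] at h
  exact h

theorem windingAngle_eq_zero_of_not_isBounded {S : Set ℂ} (hS : IsPreconnected S)
    (hSb : ¬IsBounded S) (hSP : S ⊆ (polygon P)ᶜ) {z : ℂ} (hz : z ∈ S) :
    windingAngle P z = 0 := by
  have : (cobounded ℂ ⊓ 𝓟 S).NeBot := by
    refine inf_principal_neBot_iff.2 fun U hU => not_disjoint_iff_nonempty_inter.1 fun h => ?_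
    exact hSb ((isBounded_compl_iff.2 hU).subset h.subset_compl_left)
  refine tendsto_nhds_unique (l := cobounded ℂ ⊓ 𝓟 S) ?_
    ((tendsto_windingAngle_cobounded P).mono_left inf_le_left)
  exact tendsto_const_nhds.congr' (eventually_inf_principal.2
    (Eventually.of_forall fun w hw => hS.windingAngle_eq hSP hz hw))

theorem windingAngle_vertex_add_mul {i : Fin n} (hi : i - 1 ≠ i) (u : ℂ) {r : ℝ} (hr : 0 < r) :
    windingAngle P (P i + r * u) =
      ∑ k ∈ (Finset.univ.erase i).erase (i - 1),
          arg ((P (k + 1) - (P i + r * u)) / (P k - (P i + r * u))) +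
        arg ((P (i + 1) - P i - r * u) / -u) + arg (-u / (P (i - 1) - P i - r * u)) := by
  have hnext : (P (i + 1) - (P i + r * u)) / (P i - (P i + r * u)) =
      ((r⁻¹ : ℝ) : ℂ) * ((P (i + 1) - P i - r * u) / -u) := by
    rw [show P i - (P i + r * u) = r * -u by ring, ofReal_inv, ← div_div, div_eq_inv_mul,
      div_eq_mul_inv, div_eq_mul_inv]
    ring
  have hprev : (P (i - 1 + 1) - (P i + r * u)) / (P (i - 1) - (P i + r * u)) =
      (r : ℂ) * (-u / (P (i - 1) - P i - r * u)) := by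
    rw [sub_add_cancel]
    ring
  rw [windingAngle, ← Finset.add_sum_erase _ _ (Finset.mem_univ i),
    ← Finset.add_sum_erase _ _ (Finset.mem_erase.2 ⟨hi, Finset.mem_univ _⟩), hnext, hprev,
    arg_real_mul _ (inv_pos.2 hr), arg_real_mul _ hr]
  ring

/-- The right-hand side of `windingAngle_vertex_add_mul` extends continuously to `r = 0`, and
the winding angle is constant along the ray, so it equals this limit. -/
theorem windingAngle_vertex_add_mul_of_ray {i : Fin n} (hi : i - 1 ≠ i) {u : ℂ} {r₀ : ℝ}
    (hr₀ : 0 < r₀) (hray : ∀ r ∈ Ioc 0 r₀, P i + r * u ∉ polygon P)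
    (hfar : ∀ k, k ≠ i → k ≠ i - 1 → P i ∉ segment ℝ (P k) (P (k + 1)))
    (hnext : (P (i + 1) - P i) / -u ∈ slitPlane) (hprev : -u / (P (i - 1) - P i) ∈ slitPlane) :
    windingAngle P (P i + r₀ * u) =
      ∑ k ∈ (Finset.univ.erase i).erase (i - 1), arg ((P (k + 1) - P i) / (P k - P i)) +
        arg ((P (i + 1) - P i) / -u) + arg (-u / (P (i - 1) - P i)) := by
  set g : ℝ → ℝ := fun r =>
    ∑ k ∈ (Finset.univ.erase i).erase (i - 1),
        arg ((P (k + 1) - (P i + r * u)) / (P k - (P i + r * u))) +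
      arg ((P (i + 1) - P i - r * u) / -u) + arg (-u / (P (i - 1) - P i - r * u)) with hg_def
  have hE : P (i - 1) - P i ≠ 0 := by
    rintro h
    simp [h] at hprev
  have hg0 : ContinuousAt g 0 := by
    refine ((tendsto_finsetSum _ fun k hk => ?_).add ?_).add ?_
    · obtain ⟨hk1, hk0⟩ := Finset.mem_erase.1 hk
      refine (continuousAt_arg_sub_div_sub (hfar k (Finset.ne_of_mem_erase hk0) hk1)).comp_of_eq
        (by fun_prop) (by simp)
    · refine ContinuousAt.comp (g := arg) (by simpa using continuousAt_arg hnext) ?_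
      fun_prop
    · refine ContinuousAt.comp (g := arg) (by simpa using continuousAt_arg hprev) ?_
      fun_prop (disch := simpa using hE)
  have hconst : ∀ r ∈ Ioc 0 r₀, windingAngle P (P i + r * u) = windingAngle P (P i + r₀ * u) :=
    fun r hr => (isPreconnected_Ioc.image _
      (by fun_prop : Continuous fun r : ℝ => P i + r * u).continuousOn).windingAngle_eq
      (by rintro _ ⟨r, hr, rfl⟩; exact hray r hr)
      (mem_image_of_mem _ hr) (mem_image_of_mem _ (right_mem_Ioc.2 hr₀))
  have hlim : Tendsto g (𝓝[>] 0) (𝓝 (windingAngle P (P i + r₀ * u))) :=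
    tendsto_const_nhds.congr' <| eventually_of_mem (Ioc_mem_nhdsGT hr₀) fun r hr =>
      (hconst r hr).symm.trans (windingAngle_vertex_add_mul hi u hr.1)
  rw [tendsto_nhds_unique hlim (hg0.tendsto.mono_left nhdsWithin_le_nhds), hg_def]
  simp

end WindingAngle

section Corner

theorem im_conj_sub_mul_sub_eq_zero_of_mem_segment {a b w : ℂ} (hw : w ∈ segment ℝ a b) :
    (conj (b - a) * (w - a)).im = 0 := by
  rw [segment_eq_image'] at hw
  obtain ⟨θ, -, rfl⟩ := hw
  simp only [add_sub_cancel_left, real_smul, mul_im, mul_re, conj_re, conj_im, sub_re, sub_im,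
    ofReal_re, ofReal_im]
  ring

variable {D E : ℂ} {s t : ℝ}

theorem im_div_smul_add_smul :
    (D / (s • D + t • E)).im = -(t * (conj D * E).im) / normSq (s • D + t • E) := by
  rw [div_im]
  simp only [mul_im, conj_re, conj_im, add_re, add_im, real_smul, mul_re, ofReal_re, ofReal_im]
  ring

theorem im_smul_add_smul_div : ((s • D + t • E) / E).im = -(s * (conj D * E).im) / normSq E := by
  rw [div_im]
  simp only [mul_im, conj_re, conj_im, add_re, add_im, real_smul, mul_re, ofReal_re, ofReal_im]
  ring

theorem re_smul_add_smul_pos (hD : 0 < D.re) (hE : 0 < E.re) (hs : 0 < s) (ht : 0 < t) :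
    0 < (s • D + t • E).re := by
  simp only [add_re, real_smul, re_ofReal_mul]
  positivity

theorem div_neg_mem_slitPlane_and_neg_div_mem_slitPlane (hD : 0 < D.re) (hE : 0 < E.re)
    (hs : 0 < s) (ht : 0 < t) (hΔ : (conj D * E).im ≠ 0) :
    D / -(s • D + t • E) ∈ slitPlane ∧ -(s • D + t • E) / E ∈ slitPlane := by
  have hU := normSq_pos.2 (ne_zero_of_re_pos (re_smul_add_smul_pos hD hE hs ht))
  have hE' := normSq_pos.2 (ne_zero_of_re_pos hE)
  refine ⟨mem_slitPlane_iff.2 (Or.inr ?_), mem_slitPlane_iff.2 (Or.inr ?_)⟩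
  · rw [div_neg, neg_im, im_div_smul_add_smul]
    exact neg_ne_zero.2 (div_ne_zero (neg_ne_zero.2 (mul_ne_zero ht.ne' hΔ)) hU.ne')
  · rw [neg_div, neg_im, im_smul_add_smul_div]
    exact neg_ne_zero.2 (div_ne_zero (neg_ne_zero.2 (mul_ne_zero hs.ne' hΔ)) hE'.ne')

/-- With `U = s • D + t • E`, both sides are `arg D - arg E` modulo `2π`, but `D / U` and `U / E`
have imaginary parts of the same sign, so negating them shifts both arguments by the same `±π`. -/
theorem arg_div_neg_add_arg_neg_div_ne (hD : 0 < D.re) (hE : 0 < E.re) (hs : 0 < s)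
    (ht : 0 < t) (hΔ : (conj D * E).im ≠ 0) :
    arg (D / -(s • D + t • E)) + arg (-(s • D + t • E) / E) ≠ arg D + arg E⁻¹ := by
  set U := s • D + t • E
  have hU : 0 < U.re := re_smul_add_smul_pos hD hE hs ht
  have hUn := normSq_pos.2 (ne_zero_of_re_pos hU)
  have hEn := normSq_pos.2 (ne_zero_of_re_pos hE)
  have hEinv : arg E⁻¹ = -arg E := by
    rw [arg_inv, if_neg]
    exact fun h => (arg_eq_pi_iff.1 h).1.not_gt hE
  rw [div_neg, neg_div, hEinv]
  have hDU := arg_div_of_re_pos hD hU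
  have hUE := arg_div_of_re_pos hU hE
  rcases hΔ.lt_or_gt with hneg | hpos
  · rw [arg_neg_eq_arg_sub_pi_of_im_pos, arg_neg_eq_arg_sub_pi_of_im_pos]
    · linarith [Real.pi_pos]
    · rw [im_smul_add_smul_div]; exact div_pos (by nlinarith) hEn
    · rw [im_div_smul_add_smul]; exact div_pos (by nlinarith) hUn
  · rw [arg_neg_eq_arg_add_pi_of_im_neg, arg_neg_eq_arg_add_pi_of_im_neg]
    · linarith [Real.pi_pos]
    · rw [im_smul_add_smul_div]; exact div_neg_of_neg_of_pos (by nlinarith) hEn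
    · rw [im_div_smul_add_smul]; exact div_neg_of_neg_of_pos (by nlinarith) hUn

end Corner

section LeftmostVertex

variable {n : ℕ} [NeZero n] {P : Fin n → ℂ} {s t : ℝ}

theorem corner_notMem_polygon (hΔ : (conj (P 1 - P 0) * (P (0 - 1) - P 0)).im ≠ 0)
    (hs : 0 < s) (ht : 0 < t)
    (hz : ∀ k ≠ 0, (P 0 + s • (P 1 - P 0) + t • (P (0 - 1) - P 0)).re < (P k).re) :
    P 0 + s • (P 1 - P 0) + t • (P (0 - 1) - P 0) ∉ polygon P := by
  set z := P 0 + s • (P 1 - P 0) + t • (P (0 - 1) - P 0)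
  simp only [polygon, mem_iUnion, not_exists]
  intro k hk
  by_cases hk0 : k = 0
  · subst hk0
    rw [zero_add] at hk
    refine mul_ne_zero ht.ne' hΔ ?_
    rw [← im_conj_sub_mul_sub_eq_zero_of_mem_segment hk]
    simp only [z, real_smul, mul_im, mul_re, conj_re, conj_im, add_re, add_im, sub_re, sub_im,
      ofReal_re, ofReal_im]
    ring
  by_cases hk1 : k = 0 - 1
  · subst hk1
    rw [sub_add_cancel, segment_symm] at hk
    refine mul_ne_zero hs.ne' hΔ ?_
    rw [← neg_eq_zero, ← im_conj_sub_mul_sub_eq_zero_of_mem_segment hk]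
    simp only [z, real_smul, mul_im, mul_re, conj_re, conj_im, add_re, add_im, sub_re, sub_im,
      ofReal_re, ofReal_im]
    ring
  · have hk1' : k + 1 ≠ 0 := fun h => hk1 (eq_sub_of_add_eq h)
    exact lt_irrefl z.re ((convex_halfSpace_re_gt _).segment_subset (hz k hk0) (hz _ hk1') hk)

theorem re_incident_edges_pos (hleft : ∀ k ≠ 0, (P 0).re < (P k).re)
    (hΔ : (conj (P 1 - P 0) * (P (0 - 1) - P 0)).im ≠ 0) :
    0 < (P 1 - P 0).re ∧ 0 < (P (0 - 1) - P 0).re := by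
  have h1 : (1 : Fin n) ≠ 0 := fun h => hΔ (by simp [h])
  have hm1 : (0 : Fin n) - 1 ≠ 0 := fun h => hΔ (by simp [h])
  rw [sub_re, sub_re, sub_pos, sub_pos]
  exact ⟨hleft 1 h1, hleft _ hm1⟩

theorem corner_ray_notMem_polygon (hleft : ∀ k ≠ 0, (P 0).re < (P k).re)
    (hΔ : (conj (P 1 - P 0) * (P (0 - 1) - P 0)).im ≠ 0) (hs : 0 < s) (ht : 0 < t)
    (hz : ∀ k ≠ 0, (P 0 + s • (P 1 - P 0) + t • (P (0 - 1) - P 0)).re < (P k).re) :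
    ∀ r ∈ Ioc (0 : ℝ) 1, P 0 + r * (s • (P 1 - P 0) + t • (P (0 - 1) - P 0)) ∉ polygon P := by
  rintro r ⟨hr0, hr1⟩
  have hrU : P 0 + r * (s • (P 1 - P 0) + t • (P (0 - 1) - P 0)) =
      P 0 + (r * s) • (P 1 - P 0) + (r * t) • (P (0 - 1) - P 0) := by
    simp only [real_smul]
    push_cast
    ring
  rw [hrU]
  refine corner_notMem_polygon hΔ (mul_pos hr0 hs) (mul_pos hr0 ht) fun k hk => ?_
  refine lt_of_le_of_lt ?_ (hz k hk)
  obtain ⟨hD, hE⟩ := re_incident_edges_pos hleft hΔ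
  have hU := re_smul_add_smul_pos hD hE hs ht
  rw [← hrU, add_assoc, add_re, add_re, re_ofReal_mul]
  nlinarith

theorem windingAngle_corner_ne_zero (hleft : ∀ k ≠ 0, (P 0).re < (P k).re)
    (hΔ : (conj (P 1 - P 0) * (P (0 - 1) - P 0)).im ≠ 0) (hs : 0 < s) (ht : 0 < t)
    (hz : ∀ k ≠ 0, (P 0 + s • (P 1 - P 0) + t • (P (0 - 1) - P 0)).re < (P k).re) :
    windingAngle P (P 0 + s • (P 1 - P 0) + t • (P (0 - 1) - P 0)) ≠ 0 := by
  set D := P 1 - P 0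
  set E := P (0 - 1) - P 0
  set U := s • D + t • E
  have hm1 : (0 : Fin n) - 1 ≠ 0 := fun h => hΔ (by simp [E, h])
  obtain ⟨hD, hE⟩ := re_incident_edges_pos hleft hΔ
  have hfar : ∀ k, k ≠ 0 → k ≠ 0 - 1 → P 0 ∉ segment ℝ (P k) (P (k + 1)) := fun k hk0 hk1 h =>
    lt_irrefl (P 0).re ((convex_halfSpace_re_gt _).segment_subset (hleft k hk0)
      (hleft _ fun h => hk1 (eq_sub_of_add_eq h)) h)
  have hge : ∀ k, (P 0).re ≤ (P k).re := fun k =>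
    (eq_or_ne k 0).elim (fun h => h ▸ le_rfl) fun hk => (hleft k hk).le
  have hlower : {w : ℂ | w.re < (P 0).re} ⊆ (polygon P)ᶜ :=
    preimage_Iio_subset_compl_polygon (f := reLm) hge
  obtain ⟨hnext, hprev⟩ := div_neg_mem_slitPlane_and_neg_div_mem_slitPlane hD hE hs ht hΔ
  have hcorner := windingAngle_vertex_add_mul_of_ray hm1 one_pos
    (corner_ray_notMem_polygon hleft hΔ hs ht hz) hfar
    (by simpa only [zero_add] using hnext) hprev
  have hleftRay := windingAngle_vertex_add_mul_of_ray hm1 one_pos (u := -1)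
    (fun r hr => hlower (by simpa using hr.1)) hfar
    (by simpa [D] using mem_slitPlane_iff.2 (Or.inl hD))
    (by simpa [E] using mem_slitPlane_iff.2 (Or.inl (show 0 < E⁻¹.re by
      rw [inv_re]; exact div_pos hE (normSq_pos.2 (ne_zero_of_re_pos hE)))))
  have hzero : windingAngle P (P 0 + ((1 : ℝ) : ℂ) * -1) = 0 :=
    windingAngle_eq_zero_of_not_isBounded (convex_halfSpace_re_lt _).isPreconnected
      (not_isBounded_preimage_Iio (f := reCLM) re_surjective _) hlower (by simp)
  have hzU : P 0 + s • D + t • E = P 0 + ((1 : ℝ) : ℂ) * U := by simp [U, add_assoc]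
  rw [hzU, hcorner]
  rw [hleftRay] at hzero
  simp only [zero_add, neg_neg, div_one, one_div] at hzero ⊢
  intro h
  exact arg_div_neg_add_arg_neg_div_ne hD hE hs ht hΔ (by linarith)

end LeftmostVertex

section Transport

variable {F : Type*} [NormedAddCommGroup F] [NormedSpace ℝ F] {n : ℕ} [NeZero n]

theorem notMem_polygon_and_not_isBounded_of_lt {p : Fin n → F} {f : F →L[ℝ] ℝ}
    (hf : Function.Surjective f) {c : ℝ} (hp : ∀ k, c ≤ f (p k)) {q : F} (hq : f q < c) :
    q ∉ polygon p ∧ ¬IsBounded (connectedComponentIn (polygon p)ᶜ q) := by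
  have hH := preimage_Iio_subset_compl_polygon (f := (f : F →ₗ[ℝ] ℝ)) hp
  refine ⟨hH hq, fun hb => not_isBounded_preimage_Iio hf c (hb.subset ?_)⟩
  exact ((convex_Iio c).linear_preimage (f : F →ₗ[ℝ] ℝ)).isPreconnected.subset_connectedComponentIn
    hq hH

theorem isBounded_connectedComponentIn_of_windingAngle_ne_zero (e : F ≃L[ℝ] ℂ)
    {p : Fin n → F} {q : F} (hq : q ∉ polygon p)
    (hW : windingAngle (fun k => e (p k)) (e q) ≠ 0) :
    IsBounded (connectedComponentIn (polygon p)ᶜ q) := by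
  by_contra hunb
  refine hW (windingAngle_eq_zero_of_not_isBounded
    (isPreconnected_connectedComponentIn.image e e.continuous.continuousOn) (fun hb => hunb ?_) ?_
    (mem_image_of_mem e (mem_connectedComponentIn (mem_compl hq))))
  · simpa using e.symm.lipschitz.isBounded_image hb
  · rintro _ ⟨w, hw, rfl⟩ hwP
    exact connectedComponentIn_subset _ _ hw ((map_mem_polygon_iff e.injective).1 hwP)

end Transport

theorem cross_ne_zero_of_segment_inter_eq_singleton {a b c : ℝ × ℝ} (hb : a.1 < b.1)
    (hc : a.1 < c.1) (h : segment ℝ c a ∩ segment ℝ a b = {a}) :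
    (b - a).1 * (c - a).2 - (b - a).2 * (c - a).1 ≠ 0 := by
  intro hΔ
  have hd : 0 < (b - a).1 := sub_pos.2 hb
  have he : 0 < (c - a).1 := sub_pos.2 hc
  have hca : c - a = ((c - a).1 / (b - a).1) • (b - a) :=
    Prod.ext (by simp only [Prod.smul_fst, smul_eq_mul]; field_simp)
      (by simp only [Prod.smul_snd, smul_eq_mul]; field_simp; linarith)
  have hw := wbtw_or_wbtw_smul_vadd_of_nonneg a (b - a) zero_le_one (div_nonneg he.le hd.le)
  rw [← hca, one_smul, vadd_eq_add, vadd_eq_add, sub_add_cancel, sub_add_cancel] at hw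
  rcases hw with hw | hw
  · have : b ∈ ({a} : Set (ℝ × ℝ)) := h.subset
      ⟨segment_symm ℝ a c ▸ mem_segment_iff_wbtw.2 hw, right_mem_segment ℝ a b⟩
    exact hb.ne' (congrArg Prod.fst this)
  · have : c ∈ ({a} : Set (ℝ × ℝ)) := h.subset ⟨left_mem_segment ℝ c a, mem_segment_iff_wbtw.2 hw⟩
    exact hc.ne' (congrArg Prod.fst this)

theorem IsSimplePolygon.cross_ne_zero_of_leftmost {n : ℕ} [NeZero n] {p : Fin n → ℝ × ℝ}
    (hsimple : IsSimplePolygon p) (hleft : ∀ k : Fin n, k ≠ 0 → (p 0).1 < (p k).1)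
    (h1 : (1 : Fin n) ≠ 0) :
    (p 1 - p 0).1 * (p (0 - 1) - p 0).2 - (p 1 - p 0).2 * (p (0 - 1) - p 0).1 ≠ 0 := by
  have hcorner := hsimple.1 (0 - 1)
  rw [sub_add_cancel, show (0 : Fin n) - 1 + 2 = 1 by grind] at hcorner
  exact cross_ne_zero_of_segment_inter_eq_singleton (hleft 1 h1)
    (hleft _ fun h => h1 (sub_eq_zero.1 h).symm) hcorner

/-- At the strictly leftmost vertex `p 0` of a simple closed polygon, in a small
neighborhood of `p 0`, the points strictly inside the angle formed by the two incident
edges `p 0 p 1` and `p 0 p (n-1)` belong to the interior of the polygon (the bounded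
component of the complement), while the points strictly to the left of `p 0` belong to
the exterior (the unbounded component). -/
theorem leftmost_vertex_interior (n : ℕ) [NeZero n] (hn : 3 ≤ n)
    (p : Fin n → ℝ × ℝ) (hsimple : IsSimplePolygon p)
    (hleft : ∀ k : Fin n, k ≠ 0 → (p 0).1 < (p k).1)
    (C : Set (ℝ × ℝ)) (hC : C = ⋃ k : Fin n, segment ℝ (p k) (p (k + 1))) :
    ∃ ε > (0 : ℝ),
      (∀ q : ℝ × ℝ, dist q (p 0) < ε →
          (∃ s t : ℝ, 0 < s ∧ 0 < t ∧
            q = p 0 + s • (p 1 - p 0) + t • (p (0 - 1) - p 0)) →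
          q ∉ C ∧ Bornology.IsBounded (connectedComponentIn Cᶜ q)) ∧
      (∀ q : ℝ × ℝ, dist q (p 0) < ε → q.1 < (p 0).1 →
          q ∉ C ∧ ¬ Bornology.IsBounded (connectedComponentIn Cᶜ q)) := by
  change C = polygon p at hC
  subst hC
  have h1 : (1 : Fin n) ≠ 0 := fun h => by have := Fin.one_eq_zero_iff.1 h; omega
  set e : (ℝ × ℝ) ≃L[ℝ] ℂ := equivRealProdCLM.symm
  have hre : ∀ x, (e x).re = x.1 := equivRealProdCLM_symm_apply_re
  have hΔ : (conj (e (p 1) - e (p 0)) * (e (p (0 - 1)) - e (p 0))).im ≠ 0 := by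
    convert hsimple.cross_ne_zero_of_leftmost hleft h1 using 1
    simp only [e, mul_im, map_sub, sub_re, sub_im, conj_re, conj_im, equivRealProdCLM_symm_apply_re,
      equivRealProdCLM_symm_apply_im, Prod.fst_sub, Prod.snd_sub]
    ring
  obtain ⟨ε, hε, hnear⟩ := Metric.eventually_nhds_iff.1 <| eventually_all.2 fun k =>
    eventually_imp_distrib_left.2 fun hk =>
      (continuous_fst.tendsto (p 0)).eventually (eventually_lt_nhds (hleft k hk))
  have hge : ∀ k, (p 0).1 ≤ (p k).1 := fun k =>
    (eq_or_ne k 0).elim (fun h => h ▸ le_rfl) fun hk => (hleft k hk).le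
  refine ⟨ε, hε, ?_, fun q _ hq => notMem_polygon_and_not_isBounded_of_lt
    (f := ContinuousLinearMap.fst ℝ ℝ ℝ) Prod.fst_surjective hge hq⟩
  rintro q hq ⟨s, t, hs, ht, rfl⟩
  have he : e (p 0 + s • (p 1 - p 0) + t • (p (0 - 1) - p 0)) =
      e (p 0) + s • (e (p 1) - e (p 0)) + t • (e (p (0 - 1)) - e (p 0)) := by
    simp only [map_add, map_smul, map_sub]
  have hz : ∀ k ≠ 0, (e (p 0) + s • (e (p 1) - e (p 0)) + t • (e (p (0 - 1)) - e (p 0))).re <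
      (e (p k)).re := by
    simpa only [← he, hre] using hnear hq
  have hqC : p 0 + s • (p 1 - p 0) + t • (p (0 - 1) - p 0) ∉ polygon p := by
    rw [← map_mem_polygon_iff e.injective, he]
    exact corner_notMem_polygon (P := fun k => e (p k)) hΔ hs ht hz
  refine ⟨hqC, isBounded_connectedComponentIn_of_windingAngle_ne_zero e hqC ?_⟩
  rw [he]
  exact windingAngle_corner_ne_zero (P := fun k => e (p k)) (by simpa only [hre] using hleft) hΔ
    hs ht hz
end
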